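/- There exists a continuous function $F: [0,1] \to \mathbb{R}$ which is an $ACG$-function but which, for every $1 \le r < \infty$, fails to be $L^r$-differentiable on a set of positive Lebesgue measure. -/

import Mathlib

open MeasureTheory Filter Set

/-- `α` is an `L^r`-derivative of `F` at `x`. -/
def HasLrDerivAt (r : ℝ) (F : ℝ → ℝ) (x α : ℝ) : Prop :=
  Tendsto (fun h : ℝ =>
      ((1 / h) * ∫ t in (-h)..h, |F (x + t) - F x - α * t| ^ r) ^ (1 / r) / h)
    (nhdsWithin 0 (Set.Ioi 0)) (nhds 0)

/-- Classical Vitali absolute continuity of `F` on `E`. -/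
def ACon (F : ℝ → ℝ) (E : Set ℝ) : Prop :=
  ∀ ε > (0 : ℝ), ∃ η > (0 : ℝ), ∀ (n : ℕ) (c d : Fin n → ℝ),
    (∀ i, c i < d i) → (∀ i, c i ∈ E ∧ d i ∈ E) →
    (∀ i j, i ≠ j → d i ≤ c j ∨ d j ≤ c i) →
    (∑ i, (d i - c i)) < η →
    (∑ i, |F (d i) - F (c i)|) < ε

/-- `F` is an `ACG`-function on `[0,1]`. -/
def ACG (F : ℝ → ℝ) : Prop :=
  ∃ E : ℕ → Set ℝ, (Set.Icc (0 : ℝ) 1 = ⋃ n, E n) ∧ ∀ n, ACon F (E n)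

/-!
At level `n` place tents of height `2⁻ⁿ` and half-width `2⁻³ⁿ⁻⁶` just to the right of the grid
points `k 4⁻ⁿ ∈ [0, 1]`, and let `F` be the pointwise supremum of all these tents. As the heights
tend to `0`, `F` is continuous and at every point the supremum is attained by a single tent; `F` is
Lipschitz on the set where it agrees with a given tent, so it is `ACG`. The tents cover a set of
measure at most `1/8`. At a point `x` of `[0, 1)` outside them `F x = 0`, whereas at distance at
most `h = 2 · 4⁻ⁿ` to the right of `x` lies an interval of length `2⁻³ⁿ⁻⁶` on which `F ≥ 2⁻ⁿ/2`.
For `n` large this interval alone makes the `L^r` quotient at scale `h` at least `2⁻¹⁰`, whatever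
`r ≥ 1` and the candidate derivative `α`.
-/

open Topology
open scoped NNReal

theorem LipschitzOnWith.acon {K : ℝ≥0} {F : ℝ → ℝ} {E : Set ℝ} (hF : LipschitzOnWith K F E) :
    ACon F E := by
  intro ε hε
  refine ⟨ε / (K + 1), by positivity, fun n c d hcd hmem _ hsum => ?_⟩
  calc ∑ i, |F (d i) - F (c i)| ≤ ∑ i, K * (d i - c i) := by
        gcongr with i
        simpa [Real.dist_eq, abs_of_pos (sub_pos.2 (hcd i))] using
          hF.dist_le_mul _ (hmem i).2 _ (hmem i).1
    _ = K * ∑ i, (d i - c i) := (Finset.mul_sum ..).symm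
    _ ≤ K * (ε / (K + 1)) := by gcongr
    _ < ε := by
        rw [mul_div_assoc', div_lt_iff₀ (by positivity)]
        nlinarith

theorem acg_of_forall_exists_eq {ι : Type*} [Countable ι] [Nonempty ι] {F : ℝ → ℝ}
    {g : ι → ℝ → ℝ} {K : ι → ℝ≥0} (hg : ∀ i, LipschitzWith (K i) (g i))
    (hF : ∀ x ∈ Icc (0 : ℝ) 1, ∃ i, F x = g i x) : ACG F := by
  obtain ⟨e, he⟩ := exists_surjective_nat ι
  refine ⟨fun m => {x ∈ Icc 0 1 | F x = g (e m) x}, ?_, fun m => ?_⟩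
  · ext x
    simp only [mem_iUnion]
    refine ⟨fun hx => ?_, fun ⟨_, hx, _⟩ => hx⟩
    obtain ⟨i, hi⟩ := hF x hx
    obtain ⟨m, rfl⟩ := he i
    exact ⟨m, hx, hi⟩
  · refine LipschitzOnWith.acon (K := K (e m)) <| .of_dist_le_mul fun x hx y hy => ?_
    rw [hx.2, hy.2]
    exact (hg (e m)).dist_le_mul x y

theorem ciSup_le_max_partialSups {u : ℕ → ℝ} {N : ℕ} {η : ℝ} (h : ∀ n, N < n → u n ≤ η) :
    ⨆ n, u n ≤ max (partialSups u N) η :=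
  ciSup_le fun n => (le_or_gt n N).elim (fun hn => le_max_of_le_left (le_partialSups_of_le u hn))
    fun hn => le_max_of_le_right (h n hn)

section SupOfVanishing

variable {X : Type*} {f : ℕ → X → ℝ} {ε : ℕ → ℝ}

theorem bddAbove_range_of_le_of_tendsto (hfε : ∀ n x, f n x ≤ ε n) {a : ℝ}
    (hε : Tendsto ε atTop (𝓝 a)) (x : X) : BddAbove (range fun n => f n x) := by
  obtain ⟨M, hM⟩ := hε.bddAbove_range
  exact ⟨M, by rintro _ ⟨n, rfl⟩; exact (hfε n x).trans (hM ⟨n, rfl⟩)⟩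

theorem exists_forall_le_of_tendsto_zero (hfε : ∀ n x, f n x ≤ ε n)
    (hε : Tendsto ε atTop (𝓝 0)) {η : ℝ} (hη : 0 < η) : ∃ N, ∀ n, N < n → ∀ x, f n x ≤ η := by
  obtain ⟨N, hN⟩ := eventually_atTop.1 (hε.eventually (ge_mem_nhds hη))
  exact ⟨N, fun n hn x => (hfε n x).trans (hN n hn.le)⟩

variable (hf0 : ∀ n x, 0 ≤ f n x) (hfε : ∀ n x, f n x ≤ ε n) (hε : Tendsto ε atTop (𝓝 0))
include hf0 hfε hε

theorem tendstoUniformly_partialSups_iSup :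
    TendstoUniformly (fun N x => partialSups (f · x) N) (fun x => ⨆ n, f n x) atTop := by
  refine Metric.tendstoUniformly_iff.2 fun η hη => ?_
  obtain ⟨N₀, hN₀⟩ := exists_forall_le_of_tendsto_zero hfε hε (half_pos hη)
  refine eventually_atTop.2 ⟨N₀, fun N hN x => ?_⟩
  have hbdd := bddAbove_range_of_le_of_tendsto hfε hε x
  have hP₀ : 0 ≤ partialSups (f · x) N := (hf0 0 x).trans (le_partialSups_of_le (f · x) N.zero_le)
  have hPle : partialSups (f · x) N ≤ ⨆ n, f n x :=
    partialSups_le _ _ _ fun n _ => le_ciSup hbdd n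
  have hle : ⨆ n, f n x ≤ max (partialSups (f · x) N) (η / 2) :=
    ciSup_le_max_partialSups fun n hn => hN₀ n (hN.trans_lt hn) x
  rw [Real.dist_eq, abs_of_nonneg (sub_nonneg.2 hPle)]
  linarith [max_le_add_of_nonneg hP₀ (half_pos hη).le]

theorem continuous_iSup_of_tendsto_zero [TopologicalSpace X] (hf : ∀ n, Continuous (f n)) :
    Continuous fun x => ⨆ n, f n x :=
  (tendstoUniformly_partialSups_iSup hf0 hfε hε).continuous <|
    .of_forall fun _ => Continuous.partialSups_apply fun k _ => hf k

theorem exists_eq_iSup_of_tendsto_zero (x : X) : ∃ n, f n x = ⨆ m, f m x := by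
  have hbdd := bddAbove_range_of_le_of_tendsto hfε hε x
  rcases ((hf0 0 x).trans (le_ciSup hbdd 0)).eq_or_lt with hs | hs
  · exact ⟨0, le_antisymm (le_ciSup hbdd 0) (hs ▸ hf0 0 x)⟩
  obtain ⟨N, hN⟩ := exists_forall_le_of_tendsto_zero hfε hε (half_pos hs)
  have hle := ciSup_le_max_partialSups fun n hn => hN n hn x
  obtain ⟨j, -, hj⟩ := Finset.exists_mem_eq_sup' Finset.nonempty_Iic fun n => f n x
  refine ⟨j, le_antisymm (le_ciSup hbdd j) ?_⟩
  rw [← hj, ← partialSups_apply]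
  exact (le_max_iff.1 hle).resolve_right (by linarith)

end SupOfVanishing

noncomputable def lrQuotient (r : ℝ) (F : ℝ → ℝ) (x α h : ℝ) : ℝ :=
  ((1 / h) * ∫ t in (-h)..h, |F (x + t) - F x - α * t| ^ r) ^ (1 / r) / h

theorem hasLrDerivAt_iff {r : ℝ} {F : ℝ → ℝ} {x α : ℝ} :
    HasLrDerivAt r F x α ↔ Tendsto (lrQuotient r F x α) (𝓝[>] 0) (𝓝 0) :=
  Iff.rfl

theorem div_mul_le_rpow_average {g : ℝ → ℝ} (hg : Continuous g) {r h a b c : ℝ} (hr : 1 ≤ r)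
    (hh : 0 < h) (ha : 0 ≤ a) (hab : a ≤ b) (hbh : b ≤ h) (hc : 0 ≤ c)
    (hgc : ∀ t ∈ Icc a b, c ≤ |g t|) :
    (b - a) / h * c ≤ ((1 / h) * ∫ t in (-h)..h, |g t| ^ r) ^ (1 / r) := by
  have hr₀ : 0 < r := one_pos.trans_le hr
  have hcont : Continuous fun t => |g t| ^ r := hg.abs.rpow_const fun _ => Or.inr hr₀.le
  have hint : (b - a) * c ^ r ≤ ∫ t in (-h)..h, |g t| ^ r :=
    calc (b - a) * c ^ r = ∫ _ in a..b, c ^ r := by simp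
      _ ≤ ∫ t in a..b, |g t| ^ r :=
        intervalIntegral.integral_mono_on hab intervalIntegrable_const
          (hcont.intervalIntegrable a b) fun t ht => Real.rpow_le_rpow hc (hgc t ht) hr₀.le
      _ ≤ ∫ t in (-h)..h, |g t| ^ r :=
        intervalIntegral.integral_mono_interval (by linarith) hab hbh
          (.of_forall fun t => by positivity) (hcont.intervalIntegrable _ _)
  have hq₀ : 0 ≤ (b - a) / h := div_nonneg (sub_nonneg.2 hab) hh.le
  have hq₁ : (b - a) / h ≤ 1 := (div_le_one hh).2 (by linarith)
  calc (b - a) / h * c ≤ ((b - a) / h) ^ (1 / r) * c := by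
        gcongr
        exact Real.self_le_rpow_of_le_one hq₀ hq₁ (div_le_one_of_le₀ hr hr₀.le)
    _ = ((b - a) / h * c ^ r) ^ (1 / r) := by
        rw [Real.mul_rpow hq₀ (by positivity), ← Real.rpow_mul hc, mul_one_div_cancel hr₀.ne',
          Real.rpow_one]
    _ ≤ ((1 / h) * ∫ t in (-h)..h, |g t| ^ r) ^ (1 / r) := by
        rw [div_mul_eq_mul_div, one_div_mul_eq_div]
        gcongr

theorem exists_lt_div_le_add_inv {N : ℕ} (hN : 0 < N) {x : ℝ} (hx : x ∈ Ico (0 : ℝ) 1) :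
    ∃ k ∈ Finset.range (N + 1), x < k / N ∧ (k : ℝ) / N ≤ x + 1 / N := by
  have hN' : (0 : ℝ) < N := Nat.cast_pos.2 hN
  have hxN : 0 ≤ x * N := mul_nonneg hx.1 hN'.le
  refine ⟨⌊x * N⌋₊ + 1, ?_, ?_, ?_⟩
  · rw [Finset.mem_range, add_lt_add_iff_right, Nat.floor_lt hxN]
    nlinarith [hx.2]
  · rw [lt_div_iff₀ hN']
    exact_mod_cast Nat.lt_floor_add_one (x * N)
  · rw [div_le_iff₀ hN', add_mul, one_div_mul_cancel hN'.ne']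
    push_cast
    linarith [Nat.floor_le hxN]

noncomputable def tent (c w a x : ℝ) : ℝ := max (a - a / w * |x - c|) 0

section Tent

variable {c w a x : ℝ}

theorem tent_nonneg : 0 ≤ tent c w a x := le_max_right _ _

theorem tent_le (hw : 0 ≤ w) (ha : 0 ≤ a) : tent c w a x ≤ a :=
  max_le (sub_le_self _ (by positivity)) ha

theorem tent_eq_zero_of_notMem_ball (hw : 0 < w) (ha : 0 ≤ a) (hx : x ∉ Metric.ball c w) :
    tent c w a x = 0 := by
  rw [Metric.mem_ball, not_lt, Real.dist_eq] at hx
  refine max_eq_right (sub_nonpos.2 ?_)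
  calc a = a / w * w := (div_mul_cancel₀ a hw.ne').symm
    _ ≤ a / w * |x - c| := by gcongr

theorem half_le_tent (hw : 0 < w) (ha : 0 ≤ a) (hx : |x - c| ≤ w / 2) : a / 2 ≤ tent c w a x :=
  calc a / 2 = a - a / w * (w / 2) := by field_simp; ring
    _ ≤ a - a / w * |x - c| := by gcongr
    _ ≤ tent c w a x := le_max_left _ _

theorem lipschitzWith_tent (c w a : ℝ) : LipschitzWith ‖a / w‖₊ (tent c w a) := by
  refine .of_dist_le_mul fun x y => ?_
  rw [coe_nnnorm, Real.norm_eq_abs, Real.dist_eq, Real.dist_eq]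
  calc |tent c w a x - tent c w a y|
      ≤ |(a - a / w * |x - c|) - (a - a / w * |y - c|)| := abs_max_sub_max_le_abs _ _ _
    _ = |a / w| * |(|y - c| - |x - c|)| := by rw [← abs_mul]; ring_nf
    _ ≤ |a / w| * |x - y| := by
        refine mul_le_mul_of_nonneg_left ?_ (abs_nonneg _)
        simpa [abs_sub_comm] using abs_abs_sub_abs_le_abs_sub (y - c) (x - c)

theorem continuous_tent (c w a : ℝ) : Continuous (tent c w a) :=
  (lipschitzWith_tent c w a).continuous

end Tent

noncomputable def spikeRadius (n : ℕ) : ℝ := (64 * (2 ^ n) ^ 3)⁻¹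

noncomputable def spikeCenter (n k : ℕ) : ℝ := k / (2 ^ n) ^ 2 + spikeRadius n

noncomputable def spikeLevel (n : ℕ) (x : ℝ) : ℝ :=
  (Finset.range ((2 ^ n) ^ 2 + 1)).sup' Finset.nonempty_range_add_one fun k =>
    tent (spikeCenter n k) (spikeRadius n) (2 ^ n)⁻¹ x

noncomputable def spikeFun (x : ℝ) : ℝ := ⨆ n, spikeLevel n x

def spikeFree : Set ℝ :=
  Ico 0 1 \ ⋃ n, ⋃ k ∈ Finset.range ((2 ^ n) ^ 2 + 1),
    Metric.ball (spikeCenter n k) (spikeRadius n)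

section Spikes

variable {n : ℕ} {x : ℝ}

theorem spikeRadius_pos (n : ℕ) : 0 < spikeRadius n := by unfold spikeRadius; positivity

theorem spikeLevel_nonneg (n : ℕ) (x : ℝ) : 0 ≤ spikeLevel n x :=
  Finset.le_sup'_of_le _ (Finset.mem_range.2 (Nat.succ_pos _)) tent_nonneg

theorem spikeLevel_le (n : ℕ) (x : ℝ) : spikeLevel n x ≤ (2 ^ n)⁻¹ :=
  Finset.sup'_le _ _ fun _ _ => tent_le (spikeRadius_pos n).le (by positivity)

theorem tent_le_spikeLevel {k : ℕ} (hk : k ∈ Finset.range ((2 ^ n) ^ 2 + 1)) :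
    tent (spikeCenter n k) (spikeRadius n) (2 ^ n)⁻¹ x ≤ spikeLevel n x :=
  Finset.le_sup' (fun k => tent (spikeCenter n k) (spikeRadius n) (2 ^ n)⁻¹ x) hk

theorem exists_tent_eq_spikeLevel (n : ℕ) (x : ℝ) :
    ∃ k, tent (spikeCenter n k) (spikeRadius n) (2 ^ n)⁻¹ x = spikeLevel n x := by
  obtain ⟨k, -, hk⟩ := Finset.exists_mem_eq_sup' Finset.nonempty_range_add_one
    fun k => tent (spikeCenter n k) (spikeRadius n) (2 ^ n)⁻¹ x
  exact ⟨k, hk.symm⟩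

theorem tendsto_inv_two_pow : Tendsto (fun n : ℕ => ((2 : ℝ) ^ n)⁻¹) atTop (𝓝 0) :=
  tendsto_inv_atTop_zero.comp (tendsto_pow_atTop_atTop_of_one_lt one_lt_two)

theorem spikeLevel_le_spikeFun (n : ℕ) (x : ℝ) : spikeLevel n x ≤ spikeFun x :=
  le_ciSup (bddAbove_range_of_le_of_tendsto spikeLevel_le tendsto_inv_two_pow x) n

theorem continuous_spikeFun : Continuous spikeFun :=
  continuous_iSup_of_tendsto_zero spikeLevel_nonneg spikeLevel_le tendsto_inv_two_pow
    fun _ => Continuous.finset_sup'_apply _ fun _ _ => continuous_tent _ _ _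

theorem acg_spikeFun : ACG spikeFun := by
  refine acg_of_forall_exists_eq (fun p : ℕ × ℕ => lipschitzWith_tent
    (spikeCenter p.1 p.2) (spikeRadius p.1) (2 ^ p.1)⁻¹) fun x _ => ?_
  obtain ⟨n, hn⟩ := exists_eq_iSup_of_tendsto_zero spikeLevel_nonneg spikeLevel_le
    tendsto_inv_two_pow x
  obtain ⟨k, hk⟩ := exists_tent_eq_spikeLevel n x
  exact ⟨(n, k), by rw [spikeFun, ← hn, hk]⟩

theorem spikeFun_eq_zero (hx : x ∈ spikeFree) : spikeFun x = 0 := by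
  have hlevel : ∀ n, spikeLevel n x = 0 := fun n =>
    le_antisymm (Finset.sup'_le _ _ fun k hk => (tent_eq_zero_of_notMem_ball (spikeRadius_pos n)
      (by positivity) fun hball => hx.2 (mem_iUnion.2 ⟨n, mem_iUnion₂.2 ⟨k, hk, hball⟩⟩)).le)
      (spikeLevel_nonneg n x)
  simp [spikeFun, hlevel]

theorem volume_iUnion_ball_spikeCenter_le (n : ℕ) :
    volume (⋃ k ∈ Finset.range ((2 ^ n) ^ 2 + 1), Metric.ball (spikeCenter n k) (spikeRadius n))
      ≤ ENNReal.ofReal (1 / 8 / 2 / 2 ^ n) := by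
  refine (measure_biUnion_finset_le _ _).trans ?_
  simp only [Real.volume_ball, Finset.sum_const, Finset.card_range, nsmul_eq_mul]
  rw [← ENNReal.ofReal_natCast, ← ENNReal.ofReal_mul (by positivity)]
  refine ENNReal.ofReal_le_ofReal ?_
  have hu : (1 : ℝ) ≤ 2 ^ n := one_le_pow₀ one_le_two
  push_cast
  rw [spikeRadius]
  field_simp
  nlinarith

theorem measurableSet_spikeFree : MeasurableSet spikeFree :=
  measurableSet_Ico.diff <| .iUnion fun _ =>
    Finset.measurableSet_biUnion _ fun _ _ => measurableSet_ball

theorem volume_spikeFree_pos : 0 < volume spikeFree := by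
  have hU : volume (⋃ n, ⋃ k ∈ Finset.range ((2 ^ n) ^ 2 + 1),
      Metric.ball (spikeCenter n k) (spikeRadius n)) < 1 :=
    calc _ ≤ ∑' n, ENNReal.ofReal (1 / 8 / 2 / 2 ^ n) :=
          (measure_iUnion_le _).trans (ENNReal.tsum_le_tsum volume_iUnion_ball_spikeCenter_le)
      _ = ENNReal.ofReal (1 / 8) := by
          rw [← ENNReal.ofReal_tsum_of_nonneg (fun _ => by positivity)
            (summable_geometric_two' _), tsum_geometric_two']
      _ < 1 := by norm_num
  refine lt_of_lt_of_le ?_ le_measure_sdiff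
  rw [Real.volume_Ico, sub_zero, ENNReal.ofReal_one]
  exact tsub_pos_of_lt hU

theorem inv_two_pow_ten_le_lrQuotient_spikeFun {r α x : ℝ} {n : ℕ} (hr : 1 ≤ r)
    (hx : x ∈ spikeFree) (hα : 8 * |α| ≤ 2 ^ n) :
    (2 ^ 10 : ℝ)⁻¹ ≤ lrQuotient r spikeFun x α (2 / (2 ^ n) ^ 2) := by
  obtain ⟨k, hk, hxk, hkx⟩ := exists_lt_div_le_add_inv (N := (2 ^ n) ^ 2) (by positivity) hx.1
  push_cast at hxk hkx
  set u : ℝ := 2 ^ n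
  have hu : 1 ≤ u := one_le_pow₀ one_le_two
  have htwo : 2 / u ^ 2 = 1 / u ^ 2 + 1 / u ^ 2 := by ring
  have hsq : 0 < 1 / u ^ 2 := by positivity
  set w := spikeRadius n
  set c := spikeCenter n k
  have hw : w = (64 * u ^ 3)⁻¹ := rfl
  have hc : c = k / u ^ 2 + w := rfl
  have hw₀ : 0 < w := spikeRadius_pos n
  have hwu : 3 / 2 * w ≤ 1 / u ^ 2 := by
    rw [hw]; field_simp; nlinarith
  have hgap : ∀ t ∈ Icc (c - w / 2 - x) (c + w / 2 - x),
      u⁻¹ / 4 ≤ |spikeFun (x + t) - spikeFun x - α * t| := by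
    intro t ⟨ht₁, ht₂⟩
    have hbump : u⁻¹ / 2 ≤ spikeFun (x + t) :=
      (half_le_tent hw₀ (by positivity) (abs_le.2 ⟨by linarith, by linarith⟩)).trans
        ((tent_le_spikeLevel hk).trans (spikeLevel_le_spikeFun n _))
    have hslope : α * t ≤ u⁻¹ / 4 := by
      have ht : |t| ≤ 2 / u ^ 2 := abs_le.2 ⟨by linarith, by linarith⟩
      calc α * t ≤ |α| * |t| := (le_abs_self _).trans (abs_mul α t).le
        _ ≤ u / 8 * (2 / u ^ 2) := by gcongr; linarith
        _ = u⁻¹ / 4 := by field_simp; ring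
    rw [spikeFun_eq_zero hx]
    exact le_abs.2 (Or.inl (by linarith))
  have havg := div_mul_le_rpow_average (continuous_spikeFun.comp (continuous_const_add x)
    |>.sub continuous_const |>.sub (continuous_const_mul α)) hr (h := 2 / u ^ 2) (by positivity)
    (by linarith) (by linarith) (by linarith) (by positivity) hgap
  calc (2 ^ 10 : ℝ)⁻¹
      = (c + w / 2 - x - (c - w / 2 - x)) / (2 / u ^ 2) * (u⁻¹ / 4) / (2 / u ^ 2) := by
        rw [hw]; field_simp; ring
    _ ≤ lrQuotient r spikeFun x α (2 / u ^ 2) := by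
        unfold lrQuotient
        gcongr
        exact havg

theorem not_hasLrDerivAt_spikeFun {r x : ℝ} (hr : 1 ≤ r) (hx : x ∈ spikeFree) (α : ℝ) :
    ¬ HasLrDerivAt r spikeFun x α := by
  intro hα
  have hpow : Tendsto (fun n : ℕ => ((2 : ℝ) ^ n) ^ 2) atTop atTop :=
    (tendsto_pow_atTop two_ne_zero).comp (tendsto_pow_atTop_atTop_of_one_lt one_lt_two)
  have hscale : Tendsto (fun n : ℕ => 2 / ((2 : ℝ) ^ n) ^ 2) atTop (𝓝[>] 0) :=
    tendsto_nhdsWithin_iff.2 ⟨tendsto_const_nhds.div_atTop hpow, .of_forall fun n => by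
      simp only [mem_Ioi]; positivity⟩
  have hlarge : ∀ᶠ n : ℕ in atTop, 8 * |α| ≤ 2 ^ n :=
    (tendsto_pow_atTop_atTop_of_one_lt one_lt_two).eventually_ge_atTop _
  have := ge_of_tendsto ((hasLrDerivAt_iff.1 hα).comp hscale)
    (hlarge.mono fun n hn => inv_two_pow_ten_le_lrQuotient_spikeFun hr hx hn)
  norm_num at this

end Spikes

/-- There exists a continuous `ACG`-function which, for every `r ≥ 1`, fails to
be `L^r`-differentiable on a set of positive measure. -/
theorem exists_continuous_ACG_not_lr_differentiable :
    ∃ F : ℝ → ℝ, ContinuousOn F (Set.Icc 0 1) ∧ ACG F ∧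
      ∀ r : ℝ, 1 ≤ r → ∃ S : Set ℝ, S ⊆ Set.Icc 0 1 ∧ MeasurableSet S ∧
        0 < volume S ∧ ∀ x ∈ S, ¬ ∃ α : ℝ, HasLrDerivAt r F x α :=
  ⟨spikeFun, continuous_spikeFun.continuousOn, acg_spikeFun, fun _ hr =>
    ⟨spikeFree, fun _ hx => Ico_subset_Icc_self hx.1, measurableSet_spikeFree,
      volume_spikeFree_pos, fun _ hx ⟨α, hα⟩ => not_hasLrDerivAt_spikeFun hr hx α hα⟩⟩
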